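/- arXiv:2010.07452 — 2 statements merged into one kernel-verified Lean document; each statement's English description precedes it below -/
import Mathlib

section
/- Let q > 0, σ_q > 0, and let g : ℝ → [−q, q] be measurable. Define the two-output channel Q̂ from ℝ to {−q, q} by Q̂(q|x) = P( N(g(x), σ_q²) > 0 ) and Q̂(−q|x) = P( N(g(x), σ_q²) ≤ 0 ), where N(m,σ²) denotes a Gaussian random variable with mean m and variance σ². Then the Dobrushin coefficient satisfies δ(Q̂) ≥ 2 P( N(q, σ_q²) ≤ 0 ); moreover, if there exist x, x' ∈ ℝ with g(x) = q and g(x') = −q, then δ(Q̂) = 2 P( N(q, σ_q²) ≤ 0 ). -/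
/-!
Write `F(m) = P(N(m, σ_q²) ≤ 0)`. The channel is determined by `Q̂(-q|x) = F(g x)`, and `F`
is antitone, so `g x ∈ [-q, q]` puts `Q̂(-q|x)` between `F(q)` and `F(-q) = 1 - F(q)`
(symmetry of the centred Gaussian). For a two-output channel, `Σ_y min(Q(y|x), Q(y|x'))` equals
`1 - |Q(-q|x) - Q(-q|x')|`, hence is at least `1 - (F(-q) - F(q)) = 2 F(q)`, with equality when
`g` attains both `q` and `-q`.
-/

open MeasureTheory ProbabilityTheory
open scoped NNReal

noncomputable section

/-- Dobrushin coefficient of an observation channel `Q` into a finite set: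
`δ(Q) = inf_{x,x'} Σ_y min (Q(y|x)) (Q(y|x'))`. -/
def dobrushinObs {X Y : Type*} [Fintype Y] (Q : X → Y → ℝ) : ℝ :=
  ⨅ p : X × X, ∑ y : Y, min (Q p.1 y) (Q p.2 y)

end

open Set

namespace ProbabilityTheory

lemma gaussianReal_Iic_eq_centered (m a : ℝ) (v : ℝ≥0) :
    gaussianReal m v (Iic a) = gaussianReal 0 v (Iic (a - m)) := by
  rw [← zero_add m, ← gaussianReal_map_add_const,
    Measure.map_apply (measurable_add_const m) measurableSet_Iic, zero_add]
  congr 1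
  ext x
  simp [le_sub_iff_add_le]

lemma antitone_gaussianReal_real_Iic (a : ℝ) (v : ℝ≥0) :
    Antitone fun m ↦ (gaussianReal m v).real (Iic a) := by
  intro m m' hm
  simp only [measureReal_def, gaussianReal_Iic_eq_centered _ a]
  exact ENNReal.toReal_mono (measure_ne_top _ _) (measure_mono (Iic_subset_Iic.2 (by linarith)))

lemma gaussianReal_neg_Ioi_neg {v : ℝ≥0} (hv : v ≠ 0) (m a : ℝ) :
    gaussianReal (-m) v (Ioi (-a)) = gaussianReal m v (Iic a) := by
  have := nullSingletonClass_gaussianReal (μ := m) hv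
  rw [← gaussianReal_map_neg, Measure.map_apply measurable_neg measurableSet_Ioi]
  change gaussianReal m v (-Ioi (-a)) = _
  rw [neg_Ioi, neg_neg]
  exact measure_congr Iio_ae_eq_Iic

lemma gaussianReal_real_Iic_neg {v : ℝ≥0} (hv : v ≠ 0) (m a : ℝ) :
    (gaussianReal (-m) v).real (Iic a) = 1 - (gaussianReal m v).real (Iic (-a)) := by
  rw [← compl_Ioi, probReal_compl_eq_one_sub measurableSet_Ioi, measureReal_def, measureReal_def,
    ← gaussianReal_neg_Ioi_neg hv m (-a), neg_neg]

end ProbabilityTheory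

section TwoOutputChannel

variable {X : Type*} {Q : X → Bool → ℝ}

lemma sum_min_eq_one_sub_abs (hQ : ∀ x, Q x true + Q x false = 1) (x x' : X) :
    ∑ y, min (Q x y) (Q x' y) = 1 - |Q x false - Q x' false| := by
  have h := hQ x
  have h' := hQ x'
  rw [Fintype.sum_bool]
  rcases le_total (Q x false) (Q x' false) with hle | hle
  · rw [abs_of_nonpos (by linarith), min_eq_left hle, min_eq_right (by linarith)]
    linarith
  · rw [abs_of_nonneg (by linarith), min_eq_right hle, min_eq_left (by linarith)]
    linarith

lemma one_sub_le_sum_min (hQ : ∀ x, Q x true + Q x false = 1) {a b : ℝ}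
    (hab : ∀ x, Q x false ∈ Icc a b) (x x' : X) :
    1 - (b - a) ≤ ∑ y, min (Q x y) (Q x' y) := by
  rw [sum_min_eq_one_sub_abs hQ, sub_le_sub_iff_left, abs_sub_le_iff]
  constructor <;> linarith [(hab x).1, (hab x).2, (hab x').1, (hab x').2]

lemma le_dobrushinObs_of_mem_Icc [Nonempty X] (hQ : ∀ x, Q x true + Q x false = 1) {a b : ℝ}
    (hab : ∀ x, Q x false ∈ Icc a b) :
    1 - (b - a) ≤ dobrushinObs Q :=
  le_ciInf fun p ↦ one_sub_le_sum_min hQ hab p.1 p.2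

lemma dobrushinObs_eq_of_mem_Icc (hQ : ∀ x, Q x true + Q x false = 1) {a b : ℝ}
    (hab : ∀ x, Q x false ∈ Icc a b) {x x' : X} (hx : Q x false = a) (hx' : Q x' false = b) :
    dobrushinObs Q = 1 - (b - a) := by
  have : Nonempty X := ⟨x⟩
  refine le_antisymm ?_ (le_dobrushinObs_of_mem_Icc hQ hab)
  have hbdd : BddBelow (range fun p : X × X ↦ ∑ y, min (Q p.1 y) (Q p.2 y)) :=
    ⟨_, forall_mem_range.2 fun p ↦ one_sub_le_sum_min hQ hab p.1 p.2⟩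
  refine (ciInf_le hbdd (x, x')).trans_eq ?_
  rw [sum_min_eq_one_sub_abs hQ, hx, hx', abs_sub_comm,
    abs_of_nonneg (sub_nonneg.2 (hx ▸ (hab x).2))]

end TwoOutputChannel

theorem statement17_general (q : ℝ) (σq : ℝ≥0) (hσq : 0 < σq)
    (g : ℝ → ℝ)
    (hg_range : ∀ x : ℝ, g x ∈ Set.Icc (-q) q)
    (Qhat : ℝ → Bool → ℝ)
    (hQ_pos : ∀ x : ℝ,
      Qhat x true = ((gaussianReal (g x) (σq ^ 2)) (Set.Ioi (0 : ℝ))).toReal)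
    (hQ_neg : ∀ x : ℝ,
      Qhat x false = ((gaussianReal (g x) (σq ^ 2)) (Set.Iic (0 : ℝ))).toReal) :
    2 * ((gaussianReal q (σq ^ 2)) (Set.Iic (0 : ℝ))).toReal ≤ dobrushinObs Qhat ∧
      ((∃ x x' : ℝ, g x = q ∧ g x' = -q) →
        dobrushinObs Qhat = 2 * ((gaussianReal q (σq ^ 2)) (Set.Iic (0 : ℝ))).toReal) := by
  set F : ℝ → ℝ := fun m ↦ (gaussianReal m (σq ^ 2) (Iic 0)).toReal
  have hrow : ∀ x, Qhat x true + Qhat x false = 1 := fun x ↦ by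
    rw [hQ_pos, hQ_neg, ← compl_Iic, add_comm, ← probReal_univ (μ := gaussianReal (g x) _)]
    exact measureReal_add_measureReal_compl measurableSet_Iic
  have hrange : ∀ x, Qhat x false ∈ Icc (F q) (F (-q)) := fun x ↦ by
    rw [hQ_neg]
    exact ⟨antitone_gaussianReal_real_Iic 0 _ (hg_range x).2,
      antitone_gaussianReal_real_Iic 0 _ (hg_range x).1⟩
  have hsymm : F (-q) = 1 - F q := by
    have h := gaussianReal_real_Iic_neg (pow_ne_zero 2 hσq.ne') q 0
    rwa [neg_zero] at h
  have htwo : 1 - (F (-q) - F q) = 2 * F q := by rw [hsymm]; ring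
  refine ⟨htwo ▸ le_dobrushinObs_of_mem_Icc hrow hrange, fun ⟨x, x', hx, hx'⟩ ↦ ?_⟩
  rw [← htwo]
  exact dobrushinObs_eq_of_mem_Icc hrow hrange (by rw [hQ_neg, hx]) (by rw [hQ_neg, hx'])

theorem statement17 (q : ℝ) (hq : 0 < q) (σq : ℝ≥0) (hσq : 0 < σq)
    (g : ℝ → ℝ) (hg_meas : Measurable g)
    (hg_range : ∀ x : ℝ, g x ∈ Set.Icc (-q) q)
    (Qhat : ℝ → Bool → ℝ)
    (hQ_pos : ∀ x : ℝ,
      Qhat x true = ((gaussianReal (g x) (σq ^ 2)) (Set.Ioi (0 : ℝ))).toReal)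
    (hQ_neg : ∀ x : ℝ,
      Qhat x false = ((gaussianReal (g x) (σq ^ 2)) (Set.Iic (0 : ℝ))).toReal) :
    2 * ((gaussianReal q (σq ^ 2)) (Set.Iic (0 : ℝ))).toReal ≤ dobrushinObs Qhat ∧
      ((∃ x x' : ℝ, g x = q ∧ g x' = -q) →
        dobrushinObs Qhat = 2 * ((gaussianReal q (σq ^ 2)) (Set.Iic (0 : ℝ))).toReal) :=
  statement17_general q σq hσq g hg_range Qhat hQ_pos hQ_neg
end

section
/- Let t > 0, σ_t > 0, let U be a set, and let f : ℝ × U → [−t, t] be measurable. Define the transition kernel T from ℝ×U to ℝ by T(·|x,u) = N(f(x,u), σ_t²), the Gaussian measure with mean f(x,u) and variance σ_t². Then for every u ∈ U the Dobrushin coefficient satisfies δ(T(·|·,u)) ≥ 2 P( N(t, σ_t²) ≤ 0 ), and hence δ̃(T) = inf_{u∈U} δ(T(·|·,u)) ≥ 2 P( N(t, σ_t²) ≤ 0 ). -/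
open MeasureTheory ProbabilityTheory
open scoped NNReal

noncomputable section

/-- Dobrushin coefficient of a Markov kernel `K`, via finite measurable partitions. -/
def dobrushinKernel {X : Type*} [MeasurableSpace X] (K : X → Measure X) : ℝ :=
  sInf {r | ∃ (x x' : X) (n : ℕ) (A : Fin n → Set X),
    (∀ i, MeasurableSet (A i)) ∧ Pairwise (Function.onFun Disjoint A) ∧
    (⋃ i, A i) = Set.univ ∧
    r = ∑ i, min ((K x (A i)).toReal) ((K x' (A i)).toReal)}

/-- `δ̃(T) = inf_u δ(T(·|·,u))`. -/
def dobrushinTrans {X U : Type*} [MeasurableSpace X] (T : X → U → Measure X) : ℝ :=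
  ⨅ u : U, dobrushinKernel fun x => T x u

end

open Set

/-!
The kernel admits a Doeblin minorant: on `(-∞, 0]` every Gaussian `N(m, v)` with `|m| ≤ t` has a
density at least that of `N(t, v)`, and on `(0, ∞)` at least that of `N(-t, v)`, since the mean
`m` is then at least as close to the point as the extreme mean. Gluing these two pieces gives a
measure `λ` below every `T(· | x, u)`, so each sum `∑ min (T(A_i | x), T(A_i | x'))` is at least
`λ(ℝ)`, which by the symmetry of the Gaussian is `2 P(N(t, v) ≤ 0)`.
-/

theorem measureReal_univ_le_dobrushinKernel {X : Type*} [MeasurableSpace X] [Nonempty X]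
    {K : X → Measure X} (hK : ∀ x, IsFiniteMeasure (K x)) {ν : Measure X}
    (hν : ∀ x, ν ≤ K x) : ν.real univ ≤ dobrushinKernel K := by
  obtain ⟨x₀⟩ := ‹Nonempty X›
  have : IsFiniteMeasure ν := isFiniteMeasure_of_le (K x₀) (hν x₀)
  refine le_csInf ⟨_, x₀, x₀, 1, fun _ => univ, fun _ => .univ,
    fun i j hij => absurd (Subsingleton.elim i j) hij, iUnion_const univ, rfl⟩ ?_
  rintro r ⟨x, x', n, A, hA, hdisj, hcover, rfl⟩
  calc ν.real univ = ∑ i, ν.real (A i) := by rw [← hcover, measureReal_iUnion_fintype hdisj hA]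
    _ ≤ ∑ i, min ((K x (A i)).toReal) ((K x' (A i)).toReal) :=
      Finset.sum_le_sum fun i _ =>
        le_min (ENNReal.toReal_mono (measure_ne_top _ _) (hν x _))
          (ENNReal.toReal_mono (measure_ne_top _ _) (hν x' _))

theorem gaussianPDF_le_gaussianPDF_of_sq_sub_le {a m : ℝ} {v : ℝ≥0} {y : ℝ}
    (h : (y - m) ^ 2 ≤ (y - a) ^ 2) :
    gaussianPDF a v y ≤ gaussianPDF m v y := by
  unfold gaussianPDF gaussianPDFReal
  gcongr

theorem gaussianReal_restrict_le_restrict {a m : ℝ} {v : ℝ≥0} (hv : v ≠ 0) {s : Set ℝ}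
    (hs : MeasurableSet s) (h : ∀ y ∈ s, (y - m) ^ 2 ≤ (y - a) ^ 2) :
    (gaussianReal a v).restrict s ≤ (gaussianReal m v).restrict s := by
  rw [gaussianReal_of_var_ne_zero _ hv, gaussianReal_of_var_ne_zero _ hv,
    restrict_withDensity hs, restrict_withDensity hs]
  exact withDensity_mono ((ae_restrict_iff' hs).2 (.of_forall fun y hy =>
    gaussianPDF_le_gaussianPDF_of_sq_sub_le (h y hy)))

theorem gaussianReal_neg_Ioi_zero {t : ℝ} {v : ℝ≥0} (hv : v ≠ 0) :
    gaussianReal (-t) v (Ioi 0) = gaussianReal t v (Iic 0) := by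
  have h_atom : gaussianReal t v {0} = 0 :=
    gaussianReal_absolutelyContinuous _ hv (measure_singleton 0)
  rw [← gaussianReal_map_neg, Measure.map_apply measurable_neg measurableSet_Ioi,
    show (fun x : ℝ => -x) ⁻¹' Ioi 0 = Iio 0 by ext; simp]
  exact measure_congr (Iio_ae_eq_Iic' h_atom)

noncomputable def gaussianMinorant (t : ℝ) (v : ℝ≥0) : Measure ℝ :=
  (gaussianReal t v).restrict (Iic 0) + (gaussianReal (-t) v).restrict (Ioi 0)

theorem gaussianMinorant_le {t m : ℝ} {v : ℝ≥0} (hv : v ≠ 0) (hm : m ∈ Icc (-t) t) :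
    gaussianMinorant t v ≤ gaussianReal m v := by
  obtain ⟨hm₁, hm₂⟩ := hm
  have h_neg : (gaussianReal t v).restrict (Iic 0) ≤ (gaussianReal m v).restrict (Iic 0) :=
    gaussianReal_restrict_le_restrict hv measurableSet_Iic fun y (hy : y ≤ 0) => by
      nlinarith [mul_nonneg (sub_nonneg.2 hm₂) (by linarith : 0 ≤ m + t - 2 * y)]
  have h_pos : (gaussianReal (-t) v).restrict (Ioi 0) ≤ (gaussianReal m v).restrict (Ioi 0) :=
    gaussianReal_restrict_le_restrict hv measurableSet_Ioi fun y (hy : 0 < y) => by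
      nlinarith [mul_nonneg (by linarith : 0 ≤ t + m) (by linarith : 0 ≤ t - m + 2 * y)]
  calc gaussianMinorant t v
      ≤ (gaussianReal m v).restrict (Iic 0) + (gaussianReal m v).restrict (Iic 0)ᶜ := by
        rw [compl_Iic]; exact add_le_add h_neg h_pos
    _ = gaussianReal m v := Measure.restrict_add_restrict_compl measurableSet_Iic

theorem gaussianMinorant_real_univ {t : ℝ} {v : ℝ≥0} (hv : v ≠ 0) :
    (gaussianMinorant t v).real univ = 2 * (gaussianReal t v (Iic 0)).toReal := by
  rw [measureReal_def, gaussianMinorant, Measure.add_apply, Measure.restrict_apply_univ,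
    Measure.restrict_apply_univ, gaussianReal_neg_Ioi_zero hv, ← two_mul, ENNReal.toReal_mul]
  rfl

theorem statement18_general {U : Type*} [Nonempty U]
    (t : ℝ) (σt : ℝ≥0) (hσt : 0 < σt)
    (f : ℝ → U → ℝ)
    (hf_range : ∀ (x : ℝ) (u : U), f x u ∈ Set.Icc (-t) t)
    (T : ℝ → U → MeasureTheory.Measure ℝ)
    (hT : ∀ (x : ℝ) (u : U), T x u = gaussianReal (f x u) (σt ^ 2)) :
    (∀ u : U, 2 * ((gaussianReal t (σt ^ 2)) (Set.Iic (0 : ℝ))).toReal ≤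
        dobrushinKernel fun x => T x u) ∧
      2 * ((gaussianReal t (σt ^ 2)) (Set.Iic (0 : ℝ))).toReal ≤ dobrushinTrans T := by
  have hv : σt ^ 2 ≠ 0 := pow_ne_zero _ hσt.ne'
  have hδ : ∀ u, 2 * ((gaussianReal t (σt ^ 2)) (Iic 0)).toReal ≤
      dobrushinKernel fun x => T x u := fun u => by
    rw [← gaussianMinorant_real_univ hv]
    refine measureReal_univ_le_dobrushinKernel (fun x => ?_) fun x => ?_ <;> rw [hT]
    · infer_instance
    · exact gaussianMinorant_le hv (hf_range x u)
  exact ⟨hδ, le_ciInf hδ⟩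

theorem statement18 {U : Type*} [Nonempty U]
    (t : ℝ) (ht : 0 < t) (σt : ℝ≥0) (hσt : 0 < σt)
    (f : ℝ → U → ℝ)
    (hf_meas : ∀ u : U, Measurable fun x : ℝ => f x u)
    (hf_range : ∀ (x : ℝ) (u : U), f x u ∈ Set.Icc (-t) t)
    (T : ℝ → U → MeasureTheory.Measure ℝ)
    (hT : ∀ (x : ℝ) (u : U), T x u = gaussianReal (f x u) (σt ^ 2)) :
    (∀ u : U, 2 * ((gaussianReal t (σt ^ 2)) (Set.Iic (0 : ℝ))).toReal ≤
        dobrushinKernel fun x => T x u) ∧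
      2 * ((gaussianReal t (σt ^ 2)) (Set.Iic (0 : ℝ))).toReal ≤ dobrushinTrans T :=
  statement18_general t σt hσt f hf_range T hT
end
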